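/- Let n ≥ 9 be an integer and let 𝒯 be a triangle family with C(n,3) < |𝒯| < C(n+1,3) and λ(𝒯) > n − 1. Then n + 1 ≤ |V(Γ₀(𝒯))| ≤ n + 3. -/

import Mathlib

open Finset Matrix

/-- The sign `[T : e]` of an edge `e` in a triangle `T`. -/
noncomputable def triSign (T e : Finset ℕ) : ℝ :=
  if e ⊆ T ∧ e.card = 2 ∧ T.card = 3 then
    if (T \ e).max = T.max ∨ (T \ e).min = T.min then 1 else -1
  else 0

/-- A triangle family: a nonempty finite set of 3-element subsets of ℕ. -/
def IsTriFam (F : Finset (Finset ℕ)) : Prop :=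
  F.Nonempty ∧ ∀ T ∈ F, T.card = 3

/-- The edges of the support graph of a triangle family. -/
def edgesOf (F : Finset (Finset ℕ)) : Finset (Finset ℕ) :=
  F.biUnion fun T => T.powersetCard 2

/-- The vertices of the support graph of a triangle family. -/
def vertsOf (F : Finset (Finset ℕ)) : Finset ℕ :=
  F.biUnion id

/-- The signed edge-triangle incidence matrix of a triangle family. -/
noncomputable def delta1 (F : Finset (Finset ℕ)) :
    Matrix {T // T ∈ F} {e // e ∈ edgesOf F} ℝ :=
  Matrix.of fun T e => triSign T.1 e.1

/-- The smallest positive eigenvalue of a matrix. -/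
noncomputable def lambdaMinPos {m : Type*} [Fintype m] (M : Matrix m m ℝ) : ℝ :=
  sInf {μ : ℝ | 0 < μ ∧ ∃ v : m → ℝ, v ≠ 0 ∧ M.mulVec v = μ • v}

/-- `λ(𝒯)`: the smallest positive eigenvalue of `δ₁(𝒯)ᵀ δ₁(𝒯)`. -/
noncomputable def lam (F : Finset (Finset ℕ)) : ℝ :=
  lambdaMinPos ((delta1 F)ᵀ * delta1 F)

/-- The neighborhood of `x` in the support graph `Γ₀(F)`. -/
def nbrs (F : Finset (Finset ℕ)) (x : ℕ) : Finset ℕ :=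
  (vertsOf F).filter fun y => x ≠ y ∧ ∃ T ∈ F, x ∈ T ∧ y ∈ T

/-- `φ(t)`: the maximum of `λ(𝒯)` over triangle families with `|𝒯| = t`. -/
noncomputable def phi (t : ℕ) : ℝ :=
  sSup {r : ℝ | ∃ F : Finset (Finset ℕ), IsTriFam F ∧ F.card = t ∧ lam F = r}

/-- `Λ(t) = max_{1 ≤ s ≤ t} φ(s)`. -/
noncomputable def Lam (t : ℕ) : ℝ :=
  sSup {r : ℝ | ∃ s : ℕ, 1 ≤ s ∧ s ≤ t ∧ phi s = r}

/-- `H(n) = min{ s ≥ 1 : φ(C(n,3)+s) > n - 1 }`. -/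
noncomputable def Hfun (n : ℕ) : ℕ :=
  sInf {s : ℕ | 1 ≤ s ∧ (n : ℝ) - 1 < phi (n.choose 3 + s)}

/-- The triangle family `𝒯_{c,b}`: all 3-cliques of `K_c ∨ (b isolated vertices)`. -/
def Tcb (c b : ℕ) : Finset (Finset ℕ) :=
  ((Finset.Icc 1 c).powersetCard 3) ∪
    (Finset.Icc (c+1) (c+b)).biUnion
      (fun i => ((Finset.Icc 1 c).powersetCard 2).image (fun p => insert i p))

/-!
Fix a vertex `x` and let `L` be the Laplacian of its link (the neighbours of `x`, with `y ~ z`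
when `{x, y, z} ∈ 𝒯`). An eigenvector `g` of `L` with eigenvalue `μ > 0` lifts to the edge
cochain `f {x, y} = ±g y`, with signs chosen so that `δ₁ f` on the triangle `{x, a, b}` is
`±(g a - g b)`. Then `‖δ₁ f‖² = gᵀ L g = μ ‖f‖²`, and since every cocycle `k` restricts to a
vector `h` on the link with `‖h‖² + hᵀ L h ≤ ‖k‖²`, Cauchy–Schwarz for `1 + L` shows that at most
a `1 / (1 + μ)` fraction of `f` lies in `ker δ₁`. Hence `λ(𝒯) ≤ 1 + μ`.

If `u` has degree `d > 0` in the link and `C` is its component, `m = |C|`, the vector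
`m • 1_u - 1_C` is orthogonal to `ker L` with Rayleigh quotient `m d / (m - 1)`, so `L` has an
eigenvalue `μ ∈ (0, d + 1]`. Thus `λ(𝒯) > n - 1` forces every non-isolated link vertex to have
degree at least `n - 2`, every vertex of `Γ₀(𝒯)` to lie in at least `C(n-1, 2)` triangles, and
double counting gives `|V| C(n-1, 2) ≤ 3 |𝒯| < 3 C(n+1, 3)`, i.e. `|V| ≤ n + 3`. The lower bound
is `|𝒯| ≤ C(|V|, 3)`.
-/

section Spectral

variable {m : Type*} [Fintype m] {M : Matrix m m ℝ}

lemma exists_pos_mul_sum_le_sum {ι : Type*} [Fintype ι] (μ c : ι → ℝ) (hμ : ∀ i, 0 ≤ μ i)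
    (hc : 0 < ∑ i with μ i ≠ 0, c i ^ 2) :
    ∃ j, 0 < μ j ∧ μ j * ∑ i with μ i ≠ 0, c i ^ 2 ≤ ∑ i, μ i * c i ^ 2 := by
  have hP : (univ.filter fun i => μ i ≠ 0 ∧ c i ≠ 0).Nonempty := by
    by_contra h
    rw [not_nonempty_iff_eq_empty, filter_eq_empty_iff] at h
    refine hc.ne' (sum_eq_zero fun i hi => ?_)
    have := h (mem_univ i)
    simp_all
  obtain ⟨j, hj, hmin⟩ := exists_min_image _ μ hP
  refine ⟨j, lt_of_le_of_ne (hμ j) (Ne.symm (mem_filter.1 hj).2.1), ?_⟩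
  rw [mul_sum, sum_filter]
  refine sum_le_sum fun i _ => ?_
  split_ifs with hi
  · by_cases hci : c i = 0
    · simp [hci]
    · exact mul_le_mul_of_nonneg_right (hmin i (by simp [hi, hci])) (sq_nonneg _)
  · exact mul_nonneg (hμ i) (sq_nonneg _)

namespace Matrix.IsHermitian

variable [DecidableEq m] (hM : M.IsHermitian)
include hM

lemma eigenvectorBasis_dotProduct (i j : m) :
    ⇑(hM.eigenvectorBasis i) ⬝ᵥ ⇑(hM.eigenvectorBasis j) = if i = j then 1 else 0 := by
  have h := orthonormal_iff_ite.1 hM.eigenvectorBasis.orthonormal j i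
  rw [EuclideanSpace.inner_eq_star_dotProduct] at h
  simpa [eq_comm] using h

lemma sum_smul_eigenvectorBasis_dotProduct (s : Finset m) (a : m → ℝ) (i : m) :
    (∑ j ∈ s, a j • ⇑(hM.eigenvectorBasis j)) ⬝ᵥ ⇑(hM.eigenvectorBasis i) =
      if i ∈ s then a i else 0 := by
  simp [sum_dotProduct, hM.eigenvectorBasis_dotProduct]

lemma eq_sum_dotProduct_smul_eigenvectorBasis (f : m → ℝ) :
    f = ∑ j, (⇑(hM.eigenvectorBasis j) ⬝ᵥ f) • ⇑(hM.eigenvectorBasis j) := by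
  have h := congrArg WithLp.ofLp (hM.eigenvectorBasis.sum_repr' (WithLp.toLp 2 f))
  simp only [WithLp.ofLp_sum, WithLp.ofLp_smul, EuclideanSpace.inner_eq_star_dotProduct] at h
  conv_lhs => rw [← h]
  simp [dotProduct_comm]

lemma dotProduct_self_eq_sum (f : m → ℝ) :
    f ⬝ᵥ f = ∑ j, (⇑(hM.eigenvectorBasis j) ⬝ᵥ f) ^ 2 := by
  nth_rw 1 [hM.eq_sum_dotProduct_smul_eigenvectorBasis f]
  simp only [sum_dotProduct, smul_dotProduct, smul_eq_mul, sq]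

lemma dotProduct_mulVec_eq_sum (f : m → ℝ) :
    f ⬝ᵥ M *ᵥ f = ∑ j, hM.eigenvalues j * (⇑(hM.eigenvectorBasis j) ⬝ᵥ f) ^ 2 := by
  nth_rw 2 [hM.eq_sum_dotProduct_smul_eigenvectorBasis f]
  simp only [mulVec_sum, mulVec_smul, hM.mulVec_eigenvectorBasis, dotProduct_sum,
    dotProduct_smul, smul_eq_mul, sq]
  exact sum_congr rfl fun j _ => by rw [dotProduct_comm]; ring

lemma exists_mulVec_eq_zero_dotProduct_eq (f : m → ℝ) :
    ∃ k, M *ᵥ k = 0 ∧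
      f ⬝ᵥ k = ∑ j with hM.eigenvalues j = 0, (⇑(hM.eigenvectorBasis j) ⬝ᵥ f) ^ 2 ∧
      k ⬝ᵥ k = ∑ j with hM.eigenvalues j = 0, (⇑(hM.eigenvectorBasis j) ⬝ᵥ f) ^ 2 := by
  set b : m → m → ℝ := fun j => ⇑(hM.eigenvectorBasis j)
  set Z := univ.filter fun j => hM.eigenvalues j = 0
  refine ⟨∑ j ∈ Z, (b j ⬝ᵥ f) • b j, ?_, ?_, ?_⟩
  · simp only [mulVec_sum, mulVec_smul, b, hM.mulVec_eigenvectorBasis]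
    exact sum_eq_zero fun j hj => by simp [(mem_filter.1 hj).2]
  · rw [dotProduct_comm]
    simp only [sum_dotProduct, smul_dotProduct, smul_eq_mul, sq]
    rfl
  · simp only [dotProduct_sum, dotProduct_smul, smul_eq_mul, sq]
    exact sum_congr rfl fun j hj => by simp [b, hM.sum_smul_eigenvectorBasis_dotProduct, hj]

end Matrix.IsHermitian

theorem Matrix.PosSemidef.exists_eigenvalue_mul_le [DecidableEq m] (hM : M.PosSemidef)
    {f : m → ℝ} {β : ℝ} (hβ0 : 0 ≤ β) (hβ1 : β < 1) (hf : f ≠ 0)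
    (hker : ∀ k, M *ᵥ k = 0 → (f ⬝ᵥ k) ^ 2 ≤ β * (k ⬝ᵥ k) * (f ⬝ᵥ f)) :
    ∃ μ g, 0 < μ ∧ g ≠ 0 ∧ M *ᵥ g = μ • g ∧ μ * ((1 - β) * (f ⬝ᵥ f)) ≤ f ⬝ᵥ M *ᵥ f := by
  set c : m → ℝ := fun j => ⇑(hM.1.eigenvectorBasis j) ⬝ᵥ f
  obtain ⟨k, hMk, hfk, hkk⟩ := hM.1.exists_mulVec_eq_zero_dotProduct_eq f
  have hff := hM.1.dotProduct_self_eq_sum f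
  have hf0 : 0 < f ⬝ᵥ f := by simpa using dotProduct_self_star_pos_iff.2 hf
  have hK : ∑ j with hM.1.eigenvalues j = 0, c j ^ 2 ≤ β * (f ⬝ᵥ f) := by
    have h := hker k hMk
    rw [hfk, hkk] at h
    by_contra! hlt
    have hpos := (mul_nonneg hβ0 hf0.le).trans_lt hlt
    nlinarith [mul_lt_mul_of_pos_left hlt hpos]
  have hsplit := sum_filter_add_sum_filter_not univ (fun j => hM.1.eigenvalues j ≠ 0) (c · ^ 2)
  simp only [not_not] at hsplit
  obtain ⟨j, hμj, hj⟩ :=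
    exists_pos_mul_sum_le_sum hM.1.eigenvalues c hM.eigenvalues_nonneg (by nlinarith)
  refine ⟨_, _, hμj, fun h0 => ?_, hM.1.mulVec_eigenvectorBasis j, ?_⟩
  · simpa [h0] using hM.1.eigenvectorBasis_dotProduct j j
  · rw [hM.1.dotProduct_mulVec_eq_sum]
    nlinarith

lemma Matrix.IsHermitian.dotProduct_mulVec_comm (hM : M.IsHermitian) (g h : m → ℝ) :
    g ⬝ᵥ M *ᵥ h = h ⬝ᵥ M *ᵥ g := by
  rw [dotProduct_mulVec, ← mulVec_transpose, ← conjTranspose_eq_transpose_of_trivial, hM,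
    dotProduct_comm]

theorem Matrix.PosSemidef.mul_sq_dotProduct_le_of_mulVec_eq (hM : M.PosSemidef) {μ : ℝ}
    (hμ : 0 < μ) {g : m → ℝ} (hg : M *ᵥ g = μ • g) (h : m → ℝ) :
    μ * (g ⬝ᵥ h) ^ 2 ≤ (g ⬝ᵥ g) * (h ⬝ᵥ M *ᵥ h) := by
  have hquad : ∀ t : ℝ, 0 ≤ (μ * (g ⬝ᵥ g)) * (t * t) + (2 * (μ * (g ⬝ᵥ h))) * t
      + h ⬝ᵥ M *ᵥ h := fun t => by
    have := hM.dotProduct_mulVec_nonneg (h + t • g)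
    simp only [star_trivial, mulVec_add, mulVec_smul, add_dotProduct, dotProduct_add,
      smul_dotProduct, dotProduct_smul, smul_eq_mul, hM.1.dotProduct_mulVec_comm g h, hg,
      dotProduct_comm h g] at this
    linarith
  have := discrim_le_zero hquad
  rw [discrim] at this
  nlinarith

lemma dotProduct_transpose_mul_mulVec {m n : Type*} [Fintype m] [Fintype n]
    (A : Matrix m n ℝ) (v : n → ℝ) : v ⬝ᵥ (Aᵀ * A) *ᵥ v = (A *ᵥ v) ⬝ᵥ (A *ᵥ v) := by
  rw [← mulVec_mulVec, dotProduct_mulVec, vecMul_transpose]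

lemma lambdaMinPos_le_of_mulVec_eq {ν : ℝ} (hν : 0 < ν) {g : m → ℝ} (hg : g ≠ 0)
    (hMg : M *ᵥ g = ν • g) :
    lambdaMinPos M ≤ ν :=
  csInf_le ⟨0, fun _ hr => hr.1.le⟩ ⟨hν, g, hg, hMg⟩

end Spectral

namespace SimpleGraph

variable {V : Type*} [Fintype V] [DecidableEq V] (G : SimpleGraph V) [DecidableRel G.Adj]

lemma lapMatrix_mulVec_reachable_indicator (u : V) :
    G.lapMatrix ℝ *ᵥ (fun v => if G.Reachable u v then 1 else 0) = 0 :=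
  (lapMatrix_mulVec_eq_zero_iff_forall_reachable G).2 fun i j hij => by
    simp [(⟨(·.trans hij), (·.trans hij.symm)⟩ : G.Reachable u i ↔ G.Reachable u j)]

lemma reachable_indicator_dotProduct {k : V → ℝ} (hk : G.lapMatrix ℝ *ᵥ k = 0) (u : V) :
    (fun v => if G.Reachable u v then 1 else 0) ⬝ᵥ k = #{v | G.Reachable u v} * k u := by
  have hconst := (lapMatrix_mulVec_eq_zero_iff_forall_reachable G).1 hk
  simp only [dotProduct, ite_mul, one_mul, zero_mul, ← sum_filter]
  rw [sum_congr rfl fun v hv => (hconst u v (mem_filter.1 hv).2).symm, sum_const, nsmul_eq_mul]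

theorem exists_lapMatrix_eigenvalue_le_degree_add_one {u : V} (hu : 0 < G.degree u) :
    ∃ (μ : ℝ) (g : V → ℝ), 0 < μ ∧ g ≠ 0 ∧ G.lapMatrix ℝ *ᵥ g = μ • g ∧
      μ ≤ G.degree u + 1 := by
  set m := #{v | G.Reachable u v}
  set e : V → ℝ := Pi.single u 1
  set χ : V → ℝ := fun v => if G.Reachable u v then 1 else 0
  set w := (m : ℝ) • e - χ
  have hdeg : G.degree u + 1 ≤ m := by
    rw [← card_neighborFinset_eq_degree, ← card_insert_of_notMem (G.notMem_neighborFinset_self u)]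
    refine card_le_card (insert_subset (by simp) fun v hv => ?_)
    simpa using ((mem_neighborFinset _ _ _).1 hv).reachable
  have hχ : G.lapMatrix ℝ *ᵥ χ = 0 := G.lapMatrix_mulVec_reachable_indicator u
  have hχχ : χ ⬝ᵥ χ = m := by simp [G.reachable_indicator_dotProduct hχ u, χ, m]
  have hLe : e ⬝ᵥ G.lapMatrix ℝ *ᵥ e = G.degree u := by
    simp [e, single_dotProduct, lapMatrix, degMatrix]
  have hww : w ⬝ᵥ w = m * (m - 1) := by
    simp only [w, sub_dotProduct, dotProduct_sub, smul_dotProduct, dotProduct_smul, hχχ,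
      dotProduct_comm χ e]
    simp [e, single_dotProduct, χ]
  have hwLw : w ⬝ᵥ G.lapMatrix ℝ *ᵥ w = m ^ 2 * G.degree u := by
    have hχe : χ ⬝ᵥ G.lapMatrix ℝ *ᵥ e = 0 := by
      rw [(isHermitian_lapMatrix ℝ G).dotProduct_mulVec_comm χ, hχ, dotProduct_zero]
    simp only [w, mulVec_sub, mulVec_smul, hχ, sub_zero, sub_dotProduct, dotProduct_smul,
      smul_dotProduct, hLe, hχe, smul_eq_mul]
    ring
  have hker : ∀ k, G.lapMatrix ℝ *ᵥ k = 0 → (w ⬝ᵥ k) ^ 2 ≤ 0 * (k ⬝ᵥ k) * (w ⬝ᵥ w) := by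
    intro k hk
    have hχk : χ ⬝ᵥ k = m * k u := G.reachable_indicator_dotProduct hk u
    simp [w, sub_dotProduct, e, single_dotProduct, hχk]
  have hw : w ≠ 0 := fun h => by
    have := congrFun h u
    simp [w, e, χ] at this
    have : (2 : ℝ) ≤ m := by exact_mod_cast (by omega : 2 ≤ m)
    linarith
  obtain ⟨μ, g, hμ, hg, hLg, hle⟩ :=
    (posSemidef_lapMatrix ℝ G).exists_eigenvalue_mul_le le_rfl one_pos hw hker
  refine ⟨μ, g, hμ, hg, hLg, ?_⟩
  rw [hww, hwLw] at hle
  have : (G.degree u : ℝ) + 1 ≤ m := by exact_mod_cast hdeg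
  have : (1 : ℝ) ≤ G.degree u := by exact_mod_cast hu
  have hm : μ * (m - 1) ≤ m * G.degree u := by nlinarith
  nlinarith

theorem mul_le_sum_degree {d : ℕ} (hd : ∀ v, 0 < G.degree v → d ≤ G.degree v) {a b : V}
    (hab : G.Adj a b) : (d + 1) * d ≤ ∑ v, G.degree v := by
  set S := insert a (G.neighborFinset a)
  have hpos : ∀ v ∈ S, 0 < G.degree v := fun v hv => by
    rcases mem_insert.1 hv with rfl | hv
    · exact G.degree_pos_iff_exists_adj v |>.2 ⟨b, hab⟩
    · exact G.degree_pos_iff_exists_adj v |>.2 ⟨a, ((G.mem_neighborFinset a v).1 hv).symm⟩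
  calc (d + 1) * d ≤ #S * d := by
        rw [card_insert_of_notMem (G.notMem_neighborFinset_self a), card_neighborFinset_eq_degree]
        gcongr
        exact hd a (hpos a (mem_insert_self _ _))
    _ ≤ ∑ v ∈ S, G.degree v := card_nsmul_le_sum S _ d fun v hv => hd v (hpos v hv)
    _ ≤ ∑ v, G.degree v := sum_le_univ_sum_of_nonneg fun _ => Nat.zero_le _

end SimpleGraph

lemma ne_of_card_triple {a b c : ℕ} (h : #({a, b, c} : Finset ℕ) = 3) :
    a ≠ b ∧ a ≠ c ∧ b ≠ c := by
  refine ⟨?_, ?_, ?_⟩ <;> rintro rfl <;> simp [Finset.pair_comm] at h <;>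
    exact (card_le_two.trans_lt (by norm_num : 2 < 3)).ne h

lemma exists_eq_triple {T : Finset ℕ} (hT : #T = 3) {x : ℕ} (hx : x ∈ T) :
    ∃ a b, x ≠ a ∧ x ≠ b ∧ a ≠ b ∧ T = {x, a, b} := by
  obtain ⟨a, b, hab, he⟩ := card_eq_two.1 (by rw [card_erase_of_mem hx, hT] : #(T.erase x) = 2)
  have hxe : x ∉ ({a, b} : Finset ℕ) := he ▸ notMem_erase x T
  simp only [mem_insert, mem_singleton, not_or] at hxe
  exact ⟨a, b, hxe.1, hxe.2, hab, by rw [← he, insert_erase hx]⟩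

lemma eq_triple_of_mem_erase {T : Finset ℕ} (hT : #T = 3) {x y z : ℕ} (hx : x ∈ T)
    (hy : y ∈ T.erase x) (hz : z ∈ T.erase x) (hyz : y ≠ z) : T = {x, y, z} := by
  refine (eq_of_subset_of_card_le ?_ ?_).symm
  · simp [insert_subset_iff, hx, mem_of_mem_erase hy, mem_of_mem_erase hz]
  · rw [hT, card_insert_of_notMem, card_pair hyz]
    simp [(ne_of_mem_erase hy).symm, (ne_of_mem_erase hz).symm]

lemma powersetCard_two_triple {x a b : ℕ} (hxa : x ≠ a) (hxb : x ≠ b) (hab : a ≠ b) :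
    ({x, a, b} : Finset ℕ).powersetCard 2 = {{x, a}, {x, b}, {a, b}} := by
  ext e
  simp only [mem_powersetCard, mem_insert, mem_singleton]
  constructor
  · rintro ⟨hsub, hcard⟩
    obtain ⟨u, v, huv, rfl⟩ := card_eq_two.1 hcard
    simp only [insert_subset_iff, singleton_subset_iff, mem_insert, mem_singleton] at hsub
    obtain ⟨hu | hu | hu, hv | hv | hv⟩ := hsub <;> subst hu hv <;>
      simp_all [pair_comm]
  · rintro (rfl | rfl | rfl) <;>
      exact ⟨by simp [insert_subset_iff], card_pair (by assumption)⟩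

lemma sum_offDiag_pair {a b : ℕ} (hab : a ≠ b) (φ : ℕ → ℕ → ℝ) :
    ∑ p ∈ ({a, b} : Finset ℕ).offDiag, φ p.1 p.2 = φ a b + φ b a := by
  rw [offDiag_insert (by simpa using hab), offDiag_singleton, empty_union, sum_union,
    singleton_product, product_singleton, sum_map, sum_map] <;> simp [hab]

lemma triSign_of_lt {a b c : ℕ} (hab : a < b) (hbc : b < c) :
    triSign {a, b, c} {a, b} = 1 ∧ triSign {a, b, c} {a, c} = -1 ∧
      triSign {a, b, c} {b, c} = 1 := by
  have hmax : ({a, b, c} : Finset ℕ).max = ({c} : Finset ℕ).max := by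
    rw [max_singleton]
    exact le_antisymm (Finset.max_le fun y hy => WithBot.coe_le_coe.2 (by simp at hy; omega))
      (le_max (by simp))
  have hmin : ({a, b, c} : Finset ℕ).min = ({a} : Finset ℕ).min := by
    rw [min_singleton]
    exact le_antisymm (min_le (by simp))
      (Finset.le_min fun y hy => WithTop.coe_le_coe.2 (by simp at hy; omega))
  have h3 : #({a, b, c} : Finset ℕ) = 3 :=
    card_eq_three.2 ⟨a, b, c, by omega, by omega, by omega, rfl⟩
  have hdiff : ∀ u v w : ℕ, ({u, v, w} : Finset ℕ) = {a, b, c} → u ≠ v → u ≠ w → v ≠ w →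
      ({a, b, c} : Finset ℕ) \ {v, w} = {u} := by
    intro u v w h huv huw hvw
    rw [← h]; ext; simp; omega
  refine ⟨?_, ?_, ?_⟩ <;>
    rw [triSign, if_pos ⟨by simp [insert_subset_iff], card_pair (by omega), h3⟩]
  · rw [hdiff c a b (by ext; simp; omega) (by omega) (by omega) (by omega), hmax, if_pos (by simp)]
  · rw [hdiff b a c (by ext; simp; omega) (by omega) (by omega) (by omega), hmax, hmin, if_neg]
    simp only [max_singleton, min_singleton, WithBot.coe_inj, WithTop.coe_inj]
    omega
  · rw [hdiff a b c rfl (by omega) (by omega) (by omega), hmin, if_pos (by simp)]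

lemma triSign_mul_self {T e : Finset ℕ} (he : e ⊆ T) (he2 : #e = 2) (hT : #T = 3) :
    triSign T e * triSign T e = 1 := by
  rw [triSign, if_pos ⟨he, he2, hT⟩]; split_ifs <;> norm_num

noncomputable def coneSign (x y : ℕ) : ℝ := if y < x then 1 else -1

lemma coneSign_mul_self (x y : ℕ) : coneSign x y * coneSign x y = 1 := by
  unfold coneSign; split_ifs <;> norm_num

lemma triSign_mul_coneSign {x a b : ℕ} (hxa : x ≠ a) (hxb : x ≠ b) (hab : a ≠ b) :
    triSign {x, a, b} {x, b} * coneSign x b = -(triSign {x, a, b} {x, a} * coneSign x a) := by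
  wlog h : a < b generalizing a b
  · have := this hxb hxa hab.symm (by omega)
    rw [pair_comm b a] at this
    linarith
  rcases lt_or_gt_of_ne hxa with hx | hx
  · obtain ⟨h1, h2, -⟩ := triSign_of_lt hx h
    simp only [h1, h2, coneSign]
    split_ifs <;> first | omega | norm_num
  rcases lt_or_gt_of_ne hxb with hx' | hx'
  · rw [insert_comm, pair_comm x a]
    obtain ⟨h1, -, h3⟩ := triSign_of_lt hx hx'
    simp only [h1, h3, coneSign]
    split_ifs <;> first | omega | norm_num
  · rw [show ({x, a, b} : Finset ℕ) = {a, b, x} by ext; simp; tauto, pair_comm x a, pair_comm x b]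
    obtain ⟨-, h2, h3⟩ := triSign_of_lt h hx'
    simp only [h2, h3, coneSign]
    split_ifs <;> first | omega | norm_num

lemma delta1_mulVec_apply {F : Finset (Finset ℕ)} (V : Finset ℕ → ℝ) {T : Finset ℕ}
    (hT : T ∈ F) : (delta1 F *ᵥ fun e => V e.1) ⟨T, hT⟩ =
      ∑ e ∈ T.powersetCard 2, triSign T e * V e := by
  change ∑ e : {e // e ∈ edgesOf F}, triSign T e.1 * V e.1 = _
  rw [sum_coe_sort (edgesOf F) (fun e => triSign T e * V e)]
  refine (sum_subset (subset_biUnion_of_mem _ hT) fun e _ he => ?_).symm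
  rw [triSign, if_neg fun h => he (mem_powersetCard.2 ⟨h.1, h.2.1⟩), zero_mul]

lemma delta1_mulVec_apply_triple {F : Finset (Finset ℕ)} (V : Finset ℕ → ℝ) {x a b : ℕ}
    (hxa : x ≠ a) (hxb : x ≠ b) (hab : a ≠ b) (hT : {x, a, b} ∈ F) :
    (delta1 F *ᵥ fun e => V e.1) ⟨{x, a, b}, hT⟩ =
      triSign {x, a, b} {x, a} * V {x, a} + triSign {x, a, b} {x, b} * V {x, b} +
        triSign {x, a, b} {a, b} * V {a, b} := by
  have hx : x ∉ ({a, b} : Finset ℕ) := by simp [hxa, hxb]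
  rw [delta1_mulVec_apply, powersetCard_two_triple hxa hxb hab, sum_insert, sum_insert,
    sum_singleton, add_assoc]
  · exact mt mem_singleton.1 (ne_of_mem_of_not_mem' (mem_insert_self x _) hx)
  · simp only [mem_insert, mem_singleton, not_or]
    have hb : b ∉ ({x, a} : Finset ℕ) := by simp [hab.symm, hxb.symm]
    exact ⟨(ne_of_mem_of_not_mem' (by simp) hb).symm, ne_of_mem_of_not_mem' (by simp) hx⟩

lemma mem_nbrs {F : Finset (Finset ℕ)} {x y : ℕ} :
    y ∈ nbrs F x ↔ x ≠ y ∧ ∃ T ∈ F, x ∈ T ∧ y ∈ T := by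
  simp only [nbrs, vertsOf, mem_filter, mem_biUnion, id]
  exact ⟨And.right, fun h => ⟨(h.2.elim fun T hT => ⟨T, hT.1, hT.2.2⟩), h⟩⟩

lemma sum_filter_mem_edgesOf (F : Finset (Finset ℕ)) (x : ℕ) (φ : Finset ℕ → ℝ) :
    ∑ e ∈ edgesOf F with x ∈ e, φ e = ∑ i : {y // y ∈ nbrs F x}, φ {x, i.1} := by
  have himage : (edgesOf F).filter (x ∈ ·) = (nbrs F x).image fun y => {x, y} := by
    ext e
    simp only [edgesOf, mem_filter, mem_biUnion, mem_powersetCard, mem_image, mem_nbrs]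
    constructor
    · rintro ⟨⟨T, hT, heT, he⟩, hxe⟩
      obtain ⟨u, v, huv, rfl⟩ := card_eq_two.1 he
      simp only [insert_subset_iff, singleton_subset_iff] at heT
      rcases mem_insert.1 hxe with rfl | hv
      · exact ⟨v, ⟨huv, T, hT, heT.1, heT.2⟩, rfl⟩
      · rw [mem_singleton] at hv; subst hv
        exact ⟨u, ⟨huv.symm, T, hT, heT.2, heT.1⟩, pair_comm _ _⟩
    · rintro ⟨y, ⟨hxy, T, hT, hxT, hyT⟩, rfl⟩
      exact ⟨⟨T, hT, by simp [insert_subset_iff, hxT, hyT], card_pair hxy⟩, by simp⟩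
  rw [himage, sum_image, ← sum_coe_sort]
  intro y hy z _ hyz
  have hyz' : y ∈ ({x, z} : Finset ℕ) := (show ({x, y} : Finset ℕ) = {x, z} from hyz) ▸ by simp
  simpa [(mem_nbrs.1 hy).1.symm] using hyz'

def link (F : Finset (Finset ℕ)) (x : ℕ) : SimpleGraph {y // y ∈ nbrs F x} where
  Adj i j := i.1 ≠ j.1 ∧ ({x, i.1, j.1} : Finset ℕ) ∈ F
  symm := ⟨fun _ _ h => ⟨h.1.symm, by rw [pair_comm]; exact h.2⟩⟩
  loopless := ⟨fun _ h => h.1 rfl⟩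

noncomputable instance (F : Finset (Finset ℕ)) (x : ℕ) : DecidableRel (link F x).Adj :=
  Classical.decRel _

section Link

variable {F : Finset (Finset ℕ)} (hF : ∀ T ∈ F, #T = 3) {x : ℕ}
include hF

lemma sum_sum_ite_link_adj (W : ℕ → ℕ → ℝ) :
    ∑ i, ∑ j, (if (link F x).Adj i j then W i j else 0) =
      ∑ T ∈ F with x ∈ T, ∑ p ∈ (T.erase x).offDiag, W p.1 p.2 := by
  have hpairs : ((nbrs F x ×ˢ nbrs F x).filter fun p => p.1 ≠ p.2 ∧ {x, p.1, p.2} ∈ F) =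
      (F.filter (x ∈ ·)).biUnion fun T => (T.erase x).offDiag := by
    ext ⟨y, z⟩
    simp only [mem_filter, mem_product, mem_biUnion, mem_offDiag, mem_nbrs]
    constructor
    · rintro ⟨⟨-, -⟩, hyz, hT⟩
      obtain ⟨hxy, hxz, -⟩ := ne_of_card_triple (hF _ hT)
      exact ⟨_, ⟨hT, by simp⟩, by simp [hxy.symm], by simp [hxz.symm], hyz⟩
    · rintro ⟨T, ⟨hT, hxT⟩, hy, hz, hyz⟩
      have hTeq := eq_triple_of_mem_erase (hF T hT) hxT hy hz hyz
      exact ⟨⟨⟨(ne_of_mem_erase hy).symm, T, hT, hxT, mem_of_mem_erase hy⟩,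
        ⟨(ne_of_mem_erase hz).symm, T, hT, hxT, mem_of_mem_erase hz⟩⟩, hyz, hTeq ▸ hT⟩
  have hdisj : (F.filter (x ∈ ·) : Set (Finset ℕ)).PairwiseDisjoint
      fun T => (T.erase x).offDiag := by
    intro T hT T' hT' hne
    simp only [coe_filter, Set.mem_ofPred_eq] at hT hT'
    refine disjoint_left.2 fun p hp hp' => hne ?_
    rw [mem_offDiag] at hp hp'
    rw [eq_triple_of_mem_erase (hF T hT.1) hT.2 hp.1 hp.2.1 hp.2.2,
      eq_triple_of_mem_erase (hF T' hT'.1) hT'.2 hp'.1 hp'.2.1 hp'.2.2]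
  rw [← sum_biUnion hdisj, ← hpairs, sum_filter, sum_product, ← sum_coe_sort (nbrs F x)]
  refine sum_congr rfl fun i _ => ?_
  rw [← sum_coe_sort (nbrs F x)]
  exact sum_congr rfl fun j _ => if_congr Iff.rfl rfl rfl

lemma dotProduct_lapMatrix_link (H : ℕ → ℝ) :
    (fun i : {y // y ∈ nbrs F x} => H i) ⬝ᵥ (link F x).lapMatrix ℝ *ᵥ (fun i => H i) =
      ∑ T ∈ F with x ∈ T, ∑ p ∈ (T.erase x).offDiag, (H p.1 - H p.2) ^ 2 / 2 := by
  rw [← toLinearMap₂'_apply', SimpleGraph.lapMatrix_toLinearMap₂',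
    sum_sum_ite_link_adj hF fun y z => (H y - H z) ^ 2, sum_div]
  simp only [sum_div]

lemma sum_degree_link : ∑ i, (link F x).degree i = 2 * #{T ∈ F | x ∈ T} := by
  have h := sum_sum_ite_link_adj hF (x := x) fun _ _ => (1 : ℝ)
  simp only [← SimpleGraph.degree_eq_sum_if_adj, sum_const, nsmul_one] at h
  have h2 : ∀ T ∈ F.filter (x ∈ ·), (#(T.erase x).offDiag : ℝ) = 2 := fun T hT => by
    rw [mem_filter] at hT
    rw [offDiag_card, card_erase_of_mem hT.2, hF T hT.1]; norm_num
  rw [sum_congr rfl h2, sum_const, nsmul_eq_mul] at h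
  exact_mod_cast h.trans (mul_comm _ _)

end Link

noncomputable def coneVec (x : ℕ) (G : ℕ → ℝ) (e : Finset ℕ) : ℝ :=
  if x ∈ e then ∑ y ∈ e.erase x, coneSign x y * G y else 0

noncomputable def starCoord (x : ℕ) (K : Finset ℕ → ℝ) (y : ℕ) : ℝ := coneSign x y * K {x, y}

section Cone

variable {F : Finset (Finset ℕ)} {x : ℕ}

lemma coneVec_pair (G : ℕ → ℝ) {y : ℕ} (hxy : x ≠ y) : coneVec x G {x, y} = coneSign x y * G y := by
  rw [coneVec, if_pos (mem_insert_self _ _), erase_insert (by simpa using hxy), sum_singleton]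

lemma sum_coneVec_mul (G : ℕ → ℝ) (K : Finset ℕ → ℝ) :
    ∑ e : {e // e ∈ edgesOf F}, coneVec x G e.1 * K e.1 =
      ∑ i : {y // y ∈ nbrs F x}, G i * starCoord x K i := by
  rw [sum_coe_sort (edgesOf F) fun e => coneVec x G e * K e,
    ← sum_filter_of_ne (p := (x ∈ ·)) fun e _ h => ?_, sum_filter_mem_edgesOf]
  · exact sum_congr rfl fun i _ => by rw [coneVec_pair G (mem_nbrs.1 i.2).1, starCoord]; ring
  · by_contra hx
    simp [coneVec, hx] at h

lemma coneVec_dotProduct_self (G : ℕ → ℝ) :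
    (fun e : {e // e ∈ edgesOf F} => coneVec x G e.1) ⬝ᵥ (fun e => coneVec x G e.1) =
      (fun i : {y // y ∈ nbrs F x} => G i) ⬝ᵥ (fun i => G i) := by
  refine (sum_coneVec_mul G _).trans (sum_congr rfl fun i _ => ?_)
  rw [starCoord, coneVec_pair G (mem_nbrs.1 i.2).1]
  linear_combination G i * G i * coneSign_mul_self x i

lemma delta1_coneVec_apply_of_notMem (G : ℕ → ℝ) {T : Finset ℕ} (hT : T ∈ F) (hxT : x ∉ T) :
    (delta1 F *ᵥ fun e => coneVec x G e.1) ⟨T, hT⟩ = 0 := by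
  rw [delta1_mulVec_apply]
  exact sum_eq_zero fun e he => by
    rw [coneVec, if_neg fun h => hxT ((mem_powersetCard.1 he).1 h), mul_zero]

lemma delta1_coneVec_apply_triple_sq (G : ℕ → ℝ) {a b : ℕ} (hxa : x ≠ a) (hxb : x ≠ b) (hab : a ≠ b)
    (hT : {x, a, b} ∈ F) :
    (delta1 F *ᵥ fun e => coneVec x G e.1) ⟨{x, a, b}, hT⟩ ^ 2 = (G a - G b) ^ 2 := by
  have hab' : coneVec x G {a, b} = 0 := by simp [coneVec, hxa, hxb]
  rw [delta1_mulVec_apply_triple _ hxa hxb hab, coneVec_pair G hxa, coneVec_pair G hxb, hab']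
  have h1 := triSign_mul_coneSign hxa hxb hab
  have h2 : (triSign {x, a, b} {x, a} * coneSign x a) *
      (triSign {x, a, b} {x, a} * coneSign x a) = 1 := by
    rw [mul_mul_mul_comm, coneSign_mul_self, mul_one, triSign_mul_self (by simp [insert_subset_iff])
      (card_pair hxa) (card_eq_three.2 ⟨x, a, b, hxa, hxb, hab, rfl⟩)]
  linear_combination (G b * (2 * (triSign {x, a, b} {x, a} * coneSign x a) * G a +
    (triSign {x, a, b} {x, b} * coneSign x b - triSign {x, a, b} {x, a} * coneSign x a) * G b)) * h1
    + (G a - G b) ^ 2 * h2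

lemma sum_offDiag_erase_triple (H : ℕ → ℝ) {a b : ℕ} (hxa : x ≠ a) (hxb : x ≠ b) (hab : a ≠ b) :
    ∑ p ∈ (({x, a, b} : Finset ℕ).erase x).offDiag, (H p.1 - H p.2) ^ 2 / 2 = (H a - H b) ^ 2 := by
  rw [erase_insert (by simp [hxa, hxb]), sum_offDiag_pair hab fun y z => (H y - H z) ^ 2 / 2]
  ring

lemma sq_delta1_coneVec_apply (hF : ∀ T ∈ F, #T = 3) (G : ℕ → ℝ) (T : {T // T ∈ F}) :
    (delta1 F *ᵥ fun e => coneVec x G e.1) T ^ 2 =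
      if x ∈ T.1 then ∑ p ∈ (T.1.erase x).offDiag, (G p.1 - G p.2) ^ 2 / 2 else 0 := by
  obtain ⟨T, hT⟩ := T
  split_ifs with hxT
  · obtain ⟨a, b, hxa, hxb, hab, rfl⟩ := exists_eq_triple (hF T hT) hxT
    rw [delta1_coneVec_apply_triple_sq G hxa hxb hab, sum_offDiag_erase_triple G hxa hxb hab]
  · rw [delta1_coneVec_apply_of_notMem G hT hxT, sq, mul_zero]

lemma coneVec_dotProduct_transpose_mul_mulVec (hF : ∀ T ∈ F, #T = 3) (G : ℕ → ℝ) :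
    (fun e : {e // e ∈ edgesOf F} => coneVec x G e.1) ⬝ᵥ
        ((delta1 F)ᵀ * delta1 F) *ᵥ (fun e => coneVec x G e.1) =
      (fun i : {y // y ∈ nbrs F x} => G i) ⬝ᵥ (link F x).lapMatrix ℝ *ᵥ (fun i => G i) := by
  rw [dotProduct_transpose_mul_mulVec, dotProduct_lapMatrix_link hF, sum_filter,
    ← sum_coe_sort F]
  simp only [dotProduct, ← sq]
  exact sum_congr rfl fun T _ => sq_delta1_coneVec_apply hF G T

lemma starCoord_sub_sq_of_delta1_eq_zero {K : Finset ℕ → ℝ} (hK : delta1 F *ᵥ (fun e => K e.1) = 0)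
    {a b : ℕ} (hxa : x ≠ a) (hxb : x ≠ b) (hab : a ≠ b) (hT : {x, a, b} ∈ F) :
    (starCoord x K a - starCoord x K b) ^ 2 = K {a, b} ^ 2 := by
  have h0 := congrFun hK ⟨{x, a, b}, hT⟩
  rw [delta1_mulVec_apply_triple _ hxa hxb hab, Pi.zero_apply] at h0
  have h3 : #({x, a, b} : Finset ℕ) = 3 := card_eq_three.2 ⟨x, a, b, hxa, hxb, hab, rfl⟩
  have h1 := triSign_mul_coneSign hxa hxb hab
  have hε : (triSign {x, a, b} {x, a} * coneSign x a) *
      (triSign {x, a, b} {x, a} * coneSign x a) = 1 := by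
    rw [mul_mul_mul_comm, coneSign_mul_self, mul_one,
      triSign_mul_self (by simp [insert_subset_iff]) (card_pair hxa) h3]
  have hab' := triSign_mul_self (by simp) (card_pair hab) h3
  have hσa := coneSign_mul_self x a
  have hσb := coneSign_mul_self x b
  simp only [starCoord]
  set ε := triSign {x, a, b} {x, a} * coneSign x a
  set ha := coneSign x a * K {x, a}
  set hb := coneSign x b * K {x, b}
  have hlin : ε * (ha - hb) = -(triSign {x, a, b} {a, b} * K {a, b}) := by
    linear_combination h0 + triSign {x, a, b} {x, a} * K {x, a} * hσa
      + triSign {x, a, b} {x, b} * K {x, b} * hσb - hb * h1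
  linear_combination (ε * (ha - hb) - triSign {x, a, b} {a, b} * K {a, b}) * hlin
    - (ha - hb) ^ 2 * hε + K {a, b} ^ 2 * hab'

lemma sum_sq_link_add_sum_sq_erase_le (hF : ∀ T ∈ F, #T = 3) (K : Finset ℕ → ℝ) :
    ∑ i : {y // y ∈ nbrs F x}, K {x, i.1} ^ 2 + ∑ T ∈ F with x ∈ T, K (T.erase x) ^ 2 ≤
      ∑ e ∈ edgesOf F, K e ^ 2 := by
  rw [← sum_filter_mem_edgesOf F x fun e => K e ^ 2,
    ← sum_filter_add_sum_filter_not (edgesOf F) (x ∈ ·)]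
  have hinj : Set.InjOn (·.erase x) (F.filter (x ∈ ·) : Set (Finset ℕ)) := fun T hT T' hT' h => by
    simp only [coe_filter, Set.mem_ofPred_eq] at hT hT'
    rw [← insert_erase hT.2, ← insert_erase hT'.2]
    exact congrArg (insert x) h
  have hsub : (F.filter (x ∈ ·)).image (·.erase x) ⊆ (edgesOf F).filter (x ∉ ·) := by
    simp only [subset_iff, mem_image, mem_filter]
    rintro _ ⟨T, ⟨hT, hxT⟩, rfl⟩
    refine ⟨mem_biUnion.2 ⟨T, hT, mem_powersetCard.2 ⟨erase_subset x T, ?_⟩⟩, notMem_erase x T⟩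
    rw [card_erase_of_mem hxT, hF T hT]
  rw [← sum_image (f := fun e => K e ^ 2) hinj]
  gcongr

lemma starCoord_dotProduct_add_le (hF : ∀ T ∈ F, #T = 3) {K : Finset ℕ → ℝ}
    (hK : delta1 F *ᵥ (fun e => K e.1) = 0) :
    (fun i : {y // y ∈ nbrs F x} => starCoord x K i) ⬝ᵥ (fun i => starCoord x K i) +
        (fun i : {y // y ∈ nbrs F x} => starCoord x K i) ⬝ᵥ
          (link F x).lapMatrix ℝ *ᵥ (fun i => starCoord x K i) ≤
      ∑ e ∈ edgesOf F, K e ^ 2 := by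
  refine le_of_eq_of_le ?_ (sum_sq_link_add_sum_sq_erase_le (x := x) hF K)
  rw [dotProduct_lapMatrix_link hF]
  congr 1
  · simp only [dotProduct, starCoord]
    exact sum_congr rfl fun i _ => by linear_combination K {x, i.1} ^ 2 * coneSign_mul_self x i
  · refine sum_congr rfl fun T hT => ?_
    obtain ⟨hT, hxT⟩ := mem_filter.1 hT
    obtain ⟨a, b, hxa, hxb, hab, rfl⟩ := exists_eq_triple (hF T hT) hxT
    rw [sum_offDiag_erase_triple _ hxa hxb hab, erase_insert (by simp [hxa, hxb])]
    exact starCoord_sub_sq_of_delta1_eq_zero hK hxa hxb hab hT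

lemma coneVec_dotProduct_sq_le (hF : ∀ T ∈ F, #T = 3) {μ : ℝ} (hμ : 0 < μ)
    {g : {y // y ∈ nbrs F x} → ℝ} (hLg : (link F x).lapMatrix ℝ *ᵥ g = μ • g) {G : ℕ → ℝ}
    (hG : (fun i : {y // y ∈ nbrs F x} => G i) = g) {k : {e // e ∈ edgesOf F} → ℝ}
    (hk : delta1 F *ᵥ k = 0) :
    (1 + μ) * ((fun e => coneVec x G e.1) ⬝ᵥ k) ^ 2 ≤ (g ⬝ᵥ g) * (k ⬝ᵥ k) := by
  set K : Finset ℕ → ℝ := Function.extend Subtype.val k 0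
  have hK : (fun e : {e // e ∈ edgesOf F} => K e) = k :=
    Function.extend_comp Subtype.val_injective k 0
  set h := fun i : {y // y ∈ nbrs F x} => starCoord x K i
  have hGk : (fun e => coneVec x G e.1) ⬝ᵥ k = g ⬝ᵥ h := by
    rw [← hK, ← hG]
    exact sum_coneVec_mul G K
  have hA : (1 + (link F x).lapMatrix ℝ) *ᵥ g = (1 + μ) • g := by
    rw [add_mulVec, one_mulVec, hLg, add_smul, one_smul]
  have hcs := (PosSemidef.one.add (SimpleGraph.posSemidef_lapMatrix ℝ (link F x))
    ).mul_sq_dotProduct_le_of_mulVec_eq (by linarith) hA h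
  have hQ : h ⬝ᵥ (1 + (link F x).lapMatrix ℝ) *ᵥ h ≤ k ⬝ᵥ k := by
    rw [add_mulVec, one_mulVec, dotProduct_add]
    refine (starCoord_dotProduct_add_le hF (hK ▸ hk)).trans (le_of_eq ?_)
    rw [← hK]
    simp only [dotProduct, ← sq]
    exact (sum_coe_sort _ _).symm
  rw [hGk]
  exact hcs.trans (mul_le_mul_of_nonneg_left hQ (dotProduct_self_star_nonneg _))

theorem lam_le_one_add_of_link_eigenvalue (hF : ∀ T ∈ F, #T = 3) {μ : ℝ} (hμ : 0 < μ)
    {g : {y // y ∈ nbrs F x} → ℝ} (hg : g ≠ 0) (hLg : (link F x).lapMatrix ℝ *ᵥ g = μ • g) :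
    lam F ≤ 1 + μ := by
  set G : ℕ → ℝ := Function.extend Subtype.val g 0
  have hG : (fun i : {y // y ∈ nbrs F x} => G i) = g :=
    Function.extend_comp Subtype.val_injective g 0
  set f := fun e : {e // e ∈ edgesOf F} => coneVec x G e.1
  have hff : f ⬝ᵥ f = g ⬝ᵥ g := by rw [coneVec_dotProduct_self, hG]
  have hfMf : f ⬝ᵥ ((delta1 F)ᵀ * delta1 F) *ᵥ f = μ * (g ⬝ᵥ g) := by
    rw [coneVec_dotProduct_transpose_mul_mulVec hF, hG, hLg, dotProduct_smul, smul_eq_mul]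
  have hgg : 0 < g ⬝ᵥ g := by simpa using dotProduct_self_star_pos_iff.2 hg
  have hker : ∀ k, ((delta1 F)ᵀ * delta1 F) *ᵥ k = 0 →
      (f ⬝ᵥ k) ^ 2 ≤ (1 + μ)⁻¹ * (k ⬝ᵥ k) * (f ⬝ᵥ f) := fun k hk => by
    rw [← conjTranspose_eq_transpose_of_trivial, conjTranspose_mul_self_mulVec_eq_zero] at hk
    have := coneVec_dotProduct_sq_le hF hμ hLg hG hk
    rw [hff, inv_mul_eq_div, div_mul_eq_mul_div, le_div_iff₀ (by linarith)]
    linarith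
  have hf : f ≠ 0 := fun h0 => by simp [h0] at hff; linarith
  have hpsd : ((delta1 F)ᵀ * delta1 F).PosSemidef := by
    simpa only [conjTranspose_eq_transpose_of_trivial] using
      posSemidef_conjTranspose_mul_self (delta1 F)
  obtain ⟨ν, v, hν, hv, hMv, hle⟩ := hpsd.exists_eigenvalue_mul_le (by positivity)
    (inv_lt_one_of_one_lt₀ (by linarith)) hf hker
  refine (lambdaMinPos_le_of_mulVec_eq hν hv hMv).trans ?_
  have h1 : 1 - (1 + μ)⁻¹ = μ / (1 + μ) := by field_simp; ring
  rw [hff, hfMf, h1, div_mul_eq_mul_div, mul_div_assoc', div_le_iff₀ (by linarith)] at hle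
  nlinarith [mul_pos hμ hgg]

end Cone

section Main

variable {F : Finset (Finset ℕ)} (hF : ∀ T ∈ F, #T = 3)
include hF

theorem le_degree_link_of_lt_lam {n : ℕ} (hlam : (n : ℝ) - 1 < lam F) {x : ℕ}
    {u : {y // y ∈ nbrs F x}} (hu : 0 < (link F x).degree u) : n - 2 ≤ (link F x).degree u := by
  obtain ⟨μ, g, hμ, hg, hLg, hle⟩ := (link F x).exists_lapMatrix_eigenvalue_le_degree_add_one hu
  have := lam_le_one_add_of_link_eigenvalue hF hμ hg hLg
  have : (n : ℝ) < (link F x).degree u + 3 := by linarith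
  have : n < (link F x).degree u + 3 := by exact_mod_cast this
  omega

theorem choose_two_le_card_filter_mem {n : ℕ} (hlam : (n : ℝ) - 1 < lam F) {x : ℕ}
    (hx : x ∈ vertsOf F) : (n - 1).choose 2 ≤ #{T ∈ F | x ∈ T} := by
  obtain ⟨T, hT, hxT⟩ := mem_biUnion.1 hx
  obtain ⟨a, b, hxa, hxb, hab, rfl⟩ := exists_eq_triple (hF T hT) hxT
  have ha : a ∈ nbrs F x := mem_nbrs.2 ⟨hxa, _, hT, by simp, by simp⟩
  have hb : b ∈ nbrs F x := mem_nbrs.2 ⟨hxb, _, hT, by simp, by simp⟩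
  have h := (link F x).mul_le_sum_degree (d := n - 2)
    (fun v hv => le_degree_link_of_lt_lam hF hlam hv) (a := ⟨a, ha⟩) (b := ⟨b, hb⟩) ⟨hab, hT⟩
  rw [sum_degree_link hF] at h
  rw [Nat.choose_two_right, Nat.sub_sub]
  exact Nat.div_le_of_le_mul ((Nat.mul_le_mul_right _ (by omega)).trans h)

end Main

lemma le_add_three_of_mul_choose_le {n v f : ℕ} (hn : 8 ≤ n) (hv : v * (n - 1).choose 2 ≤ 3 * f)
    (hf : f < (n + 1).choose 3) : v ≤ n + 3 := by
  obtain ⟨m, rfl⟩ := Nat.exists_eq_add_of_le hn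
  have h2 := Nat.add_one_mul_choose_eq (m + 6) 1
  have h3 := Nat.add_one_mul_choose_eq (m + 8) 2
  have h3' := Nat.add_one_mul_choose_eq (m + 7) 1
  simp only [show 8 + m - 1 = m + 6 + 1 by omega, show 8 + m + 1 = m + 8 + 1 by omega,
    Nat.choose_one_right] at *
  by_contra! h
  nlinarith

/-- If `n ≥ 9`, `C(n,3) < |𝒯| < C(n+1,3)` and `λ(𝒯) > n - 1`, then the support graph
has between `n + 1` and `n + 3` vertices. -/
theorem stmt12 (n : ℕ) (hn : 9 ≤ n) (F : Finset (Finset ℕ)) (hF : IsTriFam F)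
    (h1 : n.choose 3 < F.card) (h2 : F.card < (n + 1).choose 3)
    (hlam : (n : ℝ) - 1 < lam F) :
    n + 1 ≤ (vertsOf F).card ∧ (vertsOf F).card ≤ n + 3 := by
  have hsub : F ⊆ (vertsOf F).powersetCard 3 := fun T hT =>
    mem_powersetCard.2 ⟨subset_biUnion_of_mem id hT, hF.2 T hT⟩
  have hcard := card_le_card hsub
  rw [card_powersetCard] at hcard
  refine ⟨?_, ?_⟩
  · by_contra! h
    have := Nat.choose_le_choose 3 (Nat.le_of_lt_succ h)
    omega
  · have hsum : #(vertsOf F) * (n - 1).choose 2 ≤ 3 * #F := by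
      refine (le_sum_card_inter fun x hx => choose_two_le_card_filter_mem hF.2 hlam hx).trans ?_
      have hTsub : ∀ T ∈ F, T ⊆ vertsOf F := fun T hT => subset_biUnion_of_mem id hT
      rw [sum_congr rfl fun T hT => by rw [inter_eq_right.2 (hTsub T hT), hF.2 T hT],
        sum_const, smul_eq_mul, mul_comm]
    exact le_add_three_of_mul_choose_le (by omega) hsum h2
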